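/- Let R be a ℤ-graded ring and J a graded ideal. Then J^⊥⊥ is a graded regular ideal of R. -/

import Mathlib

/-!
Any annihilator is regular, since `X^⊥⊥⊥ = X^⊥` holds for every subset `X` of a ring. The content
is that annihilators of graded ideals are graded. If `x ∈ J` is homogeneous of degree `m` and
`a x = 0`, then comparing the components of degree `n + m` gives `a_n x = 0`; as `J` is graded, it
is additively spanned by its homogeneous elements, so `a ∈ J^⊥` forces `a_n ∈ J^⊥`. Applying this
twice shows that `J^⊥⊥` is graded.
-/

/-- The two-sided annihilator of a subset `X` of a ring `R`. -/
def perpSet {R : Type*} [Ring R] (X : Set R) : Set R :=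
  {a : R | ∀ x ∈ X, a * x = 0 ∧ x * a = 0}

/-- A two-sided ideal of a ℤ-graded ring is graded if it contains all homogeneous
components of each of its elements. -/
def IsGradedTwoSidedIdeal {R : Type*} [Ring R] (𝒜 : ℤ → AddSubgroup R) [GradedRing 𝒜]
    (J : TwoSidedIdeal R) : Prop :=
  ∀ x ∈ J, ∀ n : ℤ, ((DirectSum.decompose 𝒜 x n : 𝒜 n) : R) ∈ J

section Perp

variable {R : Type*} [Ring R]

lemma perpSet_anti {X Y : Set R} (h : X ⊆ Y) : perpSet Y ⊆ perpSet X :=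
  fun _ ha x hx => ha x (h hx)

lemma subset_perpSet_perpSet (X : Set R) : X ⊆ perpSet (perpSet X) :=
  fun x hx _ ha => (ha x hx).symm

lemma perpSet_perpSet_perpSet (X : Set R) : perpSet (perpSet (perpSet X)) = perpSet X :=
  (perpSet_anti (subset_perpSet_perpSet X)).antisymm (subset_perpSet_perpSet (perpSet X))

def perpIdeal (J : TwoSidedIdeal R) : TwoSidedIdeal R :=
  TwoSidedIdeal.mk' (perpSet (J : Set R))
    (fun x _ => by simp)
    (fun ha hb x hx => by
      obtain ⟨ha₁, ha₂⟩ := ha x hx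
      obtain ⟨hb₁, hb₂⟩ := hb x hx
      simp [add_mul, mul_add, ha₁, ha₂, hb₁, hb₂])
    (fun ha x hx => by simp [(ha x hx).1, (ha x hx).2])
    (fun {r a} ha x hx =>
      ⟨by rw [mul_assoc, (ha x hx).1, mul_zero],
        by rw [← mul_assoc]; exact (ha (x * r) (J.mul_mem_right _ _ hx)).2⟩)
    (fun {a r} ha x hx =>
      ⟨by rw [mul_assoc]; exact (ha (r * x) (J.mul_mem_left _ _ hx)).1,
        by rw [← mul_assoc, (ha x hx).2, zero_mul]⟩)

lemma coe_perpIdeal (J : TwoSidedIdeal R) : (perpIdeal J : Set R) = perpSet (J : Set R) :=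
  TwoSidedIdeal.coe_mk' _ _ _ _ _ _

lemma mem_perpIdeal {J : TwoSidedIdeal R} {a : R} :
    a ∈ perpIdeal J ↔ a ∈ perpSet (J : Set R) := by
  rw [← SetLike.mem_coe, coe_perpIdeal]

end Perp

section Graded

open DirectSum

variable {ι R σ : Type*} [DecidableEq ι] [Semiring R] [SetLike σ R] [AddSubmonoidClass σ R]
  (𝒜 : ι → σ)

lemma mul_eq_zero_of_forall_mul_decompose_eq_zero [Decomposition 𝒜] {y x : R}
    (h : ∀ j, y * (decompose 𝒜 x j : R) = 0) : y * x = 0 := by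
  classical
  rw [← sum_support_decompose 𝒜 x, Finset.mul_sum]
  exact Finset.sum_eq_zero fun j _ => h j

lemma mul_eq_zero_of_forall_decompose_mul_eq_zero [Decomposition 𝒜] {y x : R}
    (h : ∀ j, (decompose 𝒜 x j : R) * y = 0) : x * y = 0 := by
  classical
  rw [← sum_support_decompose 𝒜 x, Finset.sum_mul]
  exact Finset.sum_eq_zero fun j _ => h j

lemma decompose_mul_eq_zero_of_mul_eq_zero [AddRightCancelMonoid ι] [GradedRing 𝒜] {a x : R}
    {j : ι} (hx : x ∈ 𝒜 j) (h : a * x = 0) (i : ι) : (decompose 𝒜 a i : R) * x = 0 := by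
  rw [← coe_decompose_mul_add_of_right_mem 𝒜 hx, h, decompose_zero, DirectSum.zero_apply,
    ZeroMemClass.coe_zero]

lemma mul_decompose_eq_zero_of_mul_eq_zero [AddLeftCancelMonoid ι] [GradedRing 𝒜] {a x : R}
    {j : ι} (hx : x ∈ 𝒜 j) (h : x * a = 0) (i : ι) : x * (decompose 𝒜 a i : R) = 0 := by
  rw [← coe_decompose_mul_add_of_left_mem 𝒜 hx, h, decompose_zero, DirectSum.zero_apply,
    ZeroMemClass.coe_zero]

end Graded

lemma isGraded_perpIdeal {R : Type*} [Ring R] {𝒜 : ℤ → AddSubgroup R} [GradedRing 𝒜]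
    {J : TwoSidedIdeal R} (hJ : IsGradedTwoSidedIdeal 𝒜 J) :
    IsGradedTwoSidedIdeal 𝒜 (perpIdeal J) := by
  intro a ha n
  rw [mem_perpIdeal] at ha ⊢
  intro x hx
  have hcomp (m : ℤ) := ha _ (hJ x hx m)
  exact ⟨mul_eq_zero_of_forall_mul_decompose_eq_zero 𝒜 fun m =>
      decompose_mul_eq_zero_of_mul_eq_zero 𝒜 (SetLike.coe_mem _) (hcomp m).1 n,
    mul_eq_zero_of_forall_decompose_mul_eq_zero 𝒜 fun m =>
      mul_decompose_eq_zero_of_mul_eq_zero 𝒜 (SetLike.coe_mem _) (hcomp m).2 n⟩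

/-- If `J` is a graded two-sided ideal of a ℤ-graded ring `R`, then `J^⊥⊥` is a graded
regular ideal of `R` (regular meaning `(J^⊥⊥)^⊥⊥ = J^⊥⊥`). -/
theorem perp_perp_of_graded_isGraded_regular {R : Type*} [Ring R] (𝒜 : ℤ → AddSubgroup R)
    [GradedRing 𝒜] (J : TwoSidedIdeal R) (hJ : IsGradedTwoSidedIdeal 𝒜 J) :
    ∃ P : TwoSidedIdeal R, (P : Set R) = perpSet (perpSet (J : Set R)) ∧
      IsGradedTwoSidedIdeal 𝒜 P ∧ perpSet (perpSet (P : Set R)) = (P : Set R) := by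
  refine ⟨perpIdeal (perpIdeal J), ?_, isGraded_perpIdeal (isGraded_perpIdeal hJ), ?_⟩
  · rw [coe_perpIdeal, coe_perpIdeal]
  · rw [coe_perpIdeal, coe_perpIdeal, perpSet_perpSet_perpSet]
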